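/- Define `eraseMin : Tree α → Tree α` by `eraseMin nil = nil`, `eraseMin (node nil a r) = r`, and `eraseMin (node l a r) = node (eraseMin l) a r` for l ≠ nil. Let t = node l a r be a binary search tree with r ≠ nil and let m be the minimum key of r. Then the tree `node l m (eraseMin r)` is again a binary search tree, and its in-order traversal equals the in-order traversal of t with the single entry a deleted. -/

import Mathlib

/-- Binary trees over a type `α`. -/
inductive BTree (α : Type*) where
  | nil : BTree α
  | node (l : BTree α) (a : α) (r : BTree α) : BTree α
  deriving DecidableEq

namespace BTree

variable {α : Type*}

/-- In-order traversal. -/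
def inorder : BTree α → List α
  | nil => []
  | node l a r => inorder l ++ [a] ++ inorder r

/-- Key membership in a tree. -/
def Mem : BTree α → α → Prop
  | nil, _ => False
  | node l a r, x => Mem l x ∨ x = a ∨ Mem r x

/-- `IsSubtree s t` means `s` occurs as a subtree of `t`. -/
inductive IsSubtree : BTree α → BTree α → Prop
  | refl (t : BTree α) : IsSubtree t t
  | left {s l r : BTree α} {a : α} : IsSubtree s l → IsSubtree s (node l a r)
  | right {s l r : BTree α} {a : α} : IsSubtree s r → IsSubtree s (node l a r)

/-- `x` and `y` occupy adjacent positions in the list `L` (`x` immediately before `y`). -/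
def Adjacent (L : List α) (x y : α) : Prop :=
  ∃ i : ℕ, L[i]? = some x ∧ L[i + 1]? = some y

variable [LinearOrder α]

/-- The binary-search-tree property: at every node, all keys of the left subtree are
smaller than the root key and all keys of the right subtree are larger. -/
def IsBST : BTree α → Prop
  | nil => True
  | node l a r => (∀ x, Mem l x → x < a) ∧ (∀ x, Mem r x → a < x) ∧ IsBST l ∧ IsBST r

/-- `Ancestor t x y`: the key `x` is an ancestor of the key `y` in `t`, i.e. `y` occurs
in a proper subtree of the subtree of `t` rooted at `x`. -/
def Ancestor (t : BTree α) (x y : α) : Prop :=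
  ∃ l r : BTree α, IsSubtree (node l x r) t ∧ (Mem l y ∨ Mem r y)

/-- Depth (number of edges from the root) of a key in a binary search tree,
computed by the standard search path. -/
def depth : BTree α → α → ℕ
  | nil, _ => 0
  | node l a r, x => if x = a then 0 else if x < a then depth l x + 1 else depth r x + 1

/-- Remove the leftmost node of a tree. -/
def eraseMin : BTree α → BTree α
  | nil => nil
  | node nil _ r => r
  | node (node ll b lr) a r => node (eraseMin (node ll b lr)) a r

end BTree

/-! The in-order traversal of a BST is strictly increasing and `eraseMin` drops its first
entry. Hence the minimum `m` of `r` heads `inorder r`, followed by `inorder (eraseMin r)`, so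
`inorder l ++ [m] ++ inorder (eraseMin r) = inorder l ++ inorder r`, which is the traversal of
`node l a r` without `a`; and every key of `eraseMin r` exceeds `m`. -/

theorem List.head?_eq_of_pairwise_lt {α : Type*} [LinearOrder α] {l : List α}
    (hl : l.Pairwise (· < ·)) {m : α} (hm : m ∈ l) (hmin : ∀ z ∈ l, m ≤ z) : l.head? = some m := by
  cases l with
  | nil => cases hm
  | cons b l =>
    rcases List.mem_cons.1 hm with rfl | hm_tail
    · rfl
    · exact absurd (hmin b List.mem_cons_self) (List.rel_of_pairwise_cons hl hm_tail).not_ge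

namespace BTree

variable {α : Type*}

theorem mem_iff_mem_inorder {t : BTree α} {x : α} : Mem t x ↔ x ∈ inorder t := by
  induction t with
  | nil => simp [Mem, inorder]
  | node l a r ihl ihr => simp [Mem, inorder, ihl, ihr, or_left_comm]

theorem inorder_eraseMin (t : BTree α) : inorder (eraseMin t) = (inorder t).tail := by
  induction t with
  | nil => rfl
  | node l a r ihl =>
    cases l with
    | nil => simp [eraseMin, inorder]
    | node ll b lr =>
      have hne : inorder (node ll b lr) ≠ [] := by simp [inorder]
      simp only [eraseMin, inorder] at ihl hne ⊢
      rw [ihl, List.append_assoc (inorder ll ++ [b] ++ inorder lr), List.tail_append_of_ne_nil hne,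
        List.append_assoc]

theorem mem_of_mem_eraseMin {t : BTree α} {x : α} (h : Mem (eraseMin t) x) : Mem t x := by
  rw [mem_iff_mem_inorder, inorder_eraseMin] at h
  exact mem_iff_mem_inorder.2 (List.mem_of_mem_tail h)

variable [LinearOrder α]

theorem isBST_eraseMin {t : BTree α} (h : IsBST t) : IsBST (eraseMin t) := by
  induction t with
  | nil => exact h
  | node l a r ihl =>
    cases l with
    | nil => exact h.2.2.2
    | node ll b lr =>
      obtain ⟨hl_lt, ha_lt, hl, hr⟩ := h
      exact ⟨fun x hx => hl_lt x (mem_of_mem_eraseMin hx), ha_lt, ihl hl, hr⟩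

theorem IsBST.pairwise_lt_inorder {t : BTree α} (h : IsBST t) :
    (inorder t).Pairwise (· < ·) := by
  induction t with
  | nil => exact List.Pairwise.nil
  | node l a r ihl ihr =>
    obtain ⟨hl_lt, ha_lt, hl, hr⟩ := h
    simp only [inorder, List.pairwise_append, List.pairwise_singleton, List.mem_append,
      List.mem_singleton, ← mem_iff_mem_inorder]
    refine ⟨⟨ihl hl, trivial, fun x hx y hy => hy ▸ hl_lt x hx⟩, ihr hr, ?_⟩
    rintro x (hx | rfl) y hy
    · exact (hl_lt x hx).trans (ha_lt y hy)
    · exact ha_lt y hy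

theorem IsBST.inorder_eq_cons_eraseMin {t : BTree α} (ht : IsBST t) {m : α} (hm : Mem t m)
    (hmin : ∀ z, Mem t z → m ≤ z) : inorder t = m :: inorder (eraseMin t) := by
  have hhead : (inorder t).head? = some m :=
    List.head?_eq_of_pairwise_lt ht.pairwise_lt_inorder (mem_iff_mem_inorder.1 hm)
      fun z hz => hmin z (mem_iff_mem_inorder.2 hz)
  rw [inorder_eraseMin]
  exact (List.cons_head?_tail hhead).symm

theorem IsBST.inorder_erase_root {l r : BTree α} {a : α} (ht : IsBST (node l a r)) :
    (inorder (node l a r)).erase a = inorder l ++ inorder r := by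
  have ha_notMem : a ∉ inorder l := fun h => lt_irrefl a (ht.1 a (mem_iff_mem_inorder.2 h))
  simp [inorder, List.erase_append_right _ ha_notMem]

theorem hibbard_deletion_general (l r : BTree α) (a : α) (ht : IsBST (node l a r))
    (m : α) (hm : Mem r m) (hmin : ∀ z, Mem r z → m ≤ z) :
    IsBST (node l m (eraseMin r)) ∧
    inorder (node l m (eraseMin r)) = (inorder (node l a r)).erase a := by
  have ⟨hl_lt, ha_lt, hl, hr⟩ := ht
  have hcons := hr.inorder_eq_cons_eraseMin hm hmin
  have hm_lt : ∀ x, Mem (eraseMin r) x → m < x := by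
    have hsorted := hr.pairwise_lt_inorder
    rw [hcons, List.pairwise_cons] at hsorted
    exact fun x hx => hsorted.1 x (mem_iff_mem_inorder.1 hx)
  refine ⟨⟨fun x hx => (hl_lt x hx).trans (ha_lt m hm), hm_lt, hl, isBST_eraseMin hr⟩, ?_⟩
  rw [ht.inorder_erase_root, hcons]
  simp [inorder]

/-- Hibbard deletion: replacing the root key `a` of a BST `node l a r`
(with `r ≠ nil`) by the minimum `m` of `r` and erasing `m` from `r` yields a BST whose
in-order traversal is the original one with the single entry `a` deleted. -/
theorem hibbard_deletion (l r : BTree α) (a : α) (ht : IsBST (node l a r))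
    (hr : r ≠ nil) (m : α) (hm : Mem r m) (hmin : ∀ z, Mem r z → m ≤ z) :
    IsBST (node l m (eraseMin r)) ∧
    inorder (node l m (eraseMin r)) = (inorder (node l a r)).erase a :=
  hibbard_deletion_general l r a ht m hm hmin

end BTree
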